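/- Let p be an odd prime with p ∤ Q·D where D = P² − 4Q, and let z = z_U(p) be the entry point of p in the nondegenerate Lucas sequence U(P,Q). Then v_p(M^U_n) = v_p(U_z) if n = z; v_p(M^U_n) = 1 if n = p^k·z with k ≥ 1; and v_p(M^U_n) = 0 for all other n ≥ 1. -/

import Mathlib

open ArithmeticFunction Finset

def lucasU (P Q : ℤ) : ℕ → ℤ
  | 0 => 0
  | 1 => 1
  | (n + 2) => P * lucasU P Q (n + 1) - Q * lucasU P Q n

lemma lucasU_addf (P Q : ℤ) (m n : ℕ) :
    lucasU P Q (m + n + 1) =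
      lucasU P Q (m+1) * lucasU P Q (n+1) - Q * lucasU P Q m * lucasU P Q n := by
  induction n using Nat.twoStepInduction with
  | zero => simp [lucasU]
  | one => show lucasU P Q (m + 2) = _; simp [lucasU]; ring
  | more n ih1 ih2 =>
      have e1 : m + (n+2) + 1 = (m + (n+1) + 1) + 2 - 1 := by omega
      show lucasU P Q (m + (n+2) + 1) = _
      have : m + (n + 2) + 1 = (m + n + 1) + 2 := by omega
      rw [this, show lucasU P Q ((m+n+1)+2) = P * lucasU P Q (m+n+2) - Q * lucasU P Q (m+n+1) from rfl]
      have h2 : m + n + 2 = m + (n+1) + 1 := by omega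
      rw [h2, ih2, ih1]
      rw [show lucasU P Q (n+3) = P * lucasU P Q (n+2) - Q * lucasU P Q (n+1) from rfl,
          show lucasU P Q (n+2) = P * lucasU P Q (n+1) - Q * lucasU P Q n from rfl]
      ring

lemma key_pair (P Q : ℤ) (m k : ℕ) :
    ∃ a c : ℤ,
      lucasU P Q (k * (m+1)) =
        (k:ℤ) * (lucasU P Q (m+2))^(k-1) * lucasU P Q (m+1) + (lucasU P Q (m+1))^2 * a ∧
      lucasU P Q (k * (m+1) + 1) =
        (lucasU P Q (m+2))^k + (lucasU P Q (m+1))^2 * c := by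
  set u := lucasU P Q (m+1) with hu
  set v := lucasU P Q (m+2) with hvdef
  have hv : v = P * u - Q * lucasU P Q m := rfl
  induction k with
  | zero => exact ⟨0, 0, by simp [lucasU], by simp [lucasU]⟩
  | succ k ih =>
    obtain ⟨a, c, hX, hY⟩ := ih
    have hXr : lucasU P Q ((k+1) * (m+1)) =
        lucasU P Q (k*(m+1)+1) * u - Q * lucasU P Q (k*(m+1)) * lucasU P Q m := by
      have e : (k+1) * (m+1) = k*(m+1) + m + 1 := by ring
      rw [e, lucasU_addf]
    have hYr : lucasU P Q ((k+1) * (m+1) + 1) =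
        lucasU P Q (k*(m+1)+1) * v - Q * lucasU P Q (k*(m+1)) * u := by
      have e : (k+1) * (m+1) + 1 = k*(m+1) + (m+1) + 1 := by ring
      rw [e, lucasU_addf]
    match k with
    | 0 =>
      refine ⟨0, 0, ?_, ?_⟩
      · rw [hXr]; simp [lucasU]
      · rw [hYr]; simp [lucasU]
    | k+1 =>
      refine ⟨u*c - Q*a*(lucasU P Q m) - P*((k:ℤ)+1)*v^k,
              c*v - Q*((k:ℤ)+1)*v^k - Q*u*a, ?_, ?_⟩
      · rw [hXr, hX, hY]
        push_cast
        linear_combination (-(((k:ℤ)+1) * v^k * u)) * hv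
      · rw [hYr, hX, hY]
        push_cast
        ring

lemma key_ref (P Q : ℤ) (m k : ℕ) :
    ∃ a : ℤ,
      lucasU P Q ((k+2) * (m+1)) =
        ((k:ℤ)+2) * (lucasU P Q (m+2))^(k+1) * lucasU P Q (m+1)
          - P * ((Nat.choose (k+2) 2 : ℕ) : ℤ) * (lucasU P Q (m+2))^k * (lucasU P Q (m+1))^2
          + (lucasU P Q (m+1))^3 * a := by
  set u := lucasU P Q (m+1) with hu
  set v := lucasU P Q (m+2) with hvdef
  have hv : v = P * u - Q * lucasU P Q m := rfl
  induction k with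
  | zero =>
    have hXr : lucasU P Q (2 * (m+1)) =
        lucasU P Q (m+1+1) * u - Q * lucasU P Q (m+1) * lucasU P Q m := by
      have e : 2 * (m+1) = (m+1) + m + 1 := by ring
      rw [e, lucasU_addf]
    refine ⟨0, ?_⟩
    rw [hXr]
    norm_num
    linear_combination (-u) * hv
  | succ k ih =>
    obtain ⟨a, hX⟩ := ih
    obtain ⟨a', c, -, hY⟩ := key_pair P Q m (k+2)
    have hXr : lucasU P Q ((k+3) * (m+1)) =
        lucasU P Q ((k+2)*(m+1)+1) * u - Q * lucasU P Q ((k+2)*(m+1)) * lucasU P Q m := by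
      have e : (k+3) * (m+1) = (k+2)*(m+1) + m + 1 := by ring
      rw [e, lucasU_addf]
    have hC : ((Nat.choose (k+3) 2 : ℕ) : ℤ) = ((Nat.choose (k+2) 2 : ℕ) : ℤ) + (k+2) := by
      have : Nat.choose (k+3) 2 = Nat.choose (k+2) 1 + Nat.choose (k+2) 2 :=
        Nat.choose_succ_succ (k+2) 1
      rw [this]; push_cast [Nat.choose_one_right]; ring
    have e3 : (k:ℕ)+1+2 = k+3 := by omega
    rw [e3, hXr, hX, hY]
    refine ⟨c + P^2 * ((Nat.choose (k+2) 2 : ℕ) : ℤ) * v^k - Q*a*(lucasU P Q m), ?_⟩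
    push_cast [hC]
    linear_combination (-(((k:ℤ)+2) * v^(k+1) * u) + P * ((Nat.choose (k+2) 2 : ℕ) : ℤ) * v^k * u^2) * hv

lemma val_ppow (p : ℕ) [Fact p.Prime] (r : ℕ) : padicValInt p ((p:ℤ)^r) = r := by
  unfold padicValInt
  rw [Int.natAbs_pow]
  simp [padicValNat.prime_pow]

lemma val_pmul (p : ℕ) [hp : Fact p.Prime] (r : ℕ) (y : ℤ) (hy : ¬ (p:ℤ) ∣ y) :
    padicValInt p ((p:ℤ)^r * y) = r := by
  have hy0 : y ≠ 0 := fun h => hy (h ▸ dvd_zero _)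
  have hp0 : ((p:ℤ)^r) ≠ 0 := pow_ne_zero _ (by exact_mod_cast hp.out.pos.ne')
  rw [padicValInt.mul hp0 hy0, val_ppow, padicValInt.eq_zero_of_not_dvd hy, add_zero]

lemma val_extract (p : ℕ) [Fact p.Prime] (x : ℤ) (hx : x ≠ 0) :
    ∃ y : ℤ, x = (p:ℤ)^(padicValInt p x) * y ∧ ¬ (p:ℤ) ∣ y := by
  obtain ⟨y, hy⟩ := padicValInt_dvd (p := p) x
  refine ⟨y, hy, fun ⟨w, hw⟩ => ?_⟩
  have hx2 : x = (p:ℤ)^(padicValInt p x + 1) * w := by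
    calc x = (p:ℤ)^(padicValInt p x) * y := hy
    _ = (p:ℤ)^(padicValInt p x + 1) * w := by rw [hw]; ring
  have : (p:ℤ)^(padicValInt p x + 1) ∣ x := ⟨w, hx2⟩
  rcases (padicValInt_dvd_iff _ x).mp this with h | h
  · exact hx h
  · omega

lemma one_le_val (p : ℕ) [Fact p.Prime] (x : ℤ) (hx : x ≠ 0) (hdvd : (p:ℤ) ∣ x) :
    1 ≤ padicValInt p x := by
  have : (p:ℤ)^1 ∣ x := by simpa using hdvd
  rcases (padicValInt_dvd_iff 1 x).mp this with h | h
  · exact absurd h hx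
  · exact h

-- descent
lemma descent (p : ℕ) (hp : p.Prime) (P Q : ℤ) (hQ : ¬ (p:ℤ) ∣ Q) :
    ∀ m : ℕ, (p:ℤ) ∣ lucasU P Q m → (p:ℤ) ∣ lucasU P Q (m+1) → False := by
  have hpZ : Prime (p:ℤ) := Nat.prime_iff_prime_int.mp hp
  intro m
  induction m with
  | zero => intro _ h1; rw [show lucasU P Q 1 = 1 from rfl] at h1
            exact hpZ.not_dvd_one h1
  | succ m ih =>
    intro h1 h2
    have h3 : (p:ℤ) ∣ Q * lucasU P Q m := by
      have : Q * lucasU P Q m = P * lucasU P Q (m+1) - lucasU P Q (m+2) := by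
        rw [show lucasU P Q (m+2) = P * lucasU P Q (m+1) - Q * lucasU P Q m from rfl]; ring
      rw [this]
      exact dvd_sub (Dvd.dvd.mul_left h1 P) h2
    rcases hpZ.dvd_mul.mp h3 with h | h
    · exact hQ h
    · exact ih h h1

lemma u_dvd_mul (P Q : ℤ) (m k : ℕ) : lucasU P Q (m+1) ∣ lucasU P Q (k * (m+1)) := by
  obtain ⟨a, c, hX, -⟩ := key_pair P Q m k
  exact ⟨(k:ℤ) * (lucasU P Q (m+2))^(k-1) + lucasU P Q (m+1) * a, by rw [hX]; ring⟩

-- law of apparition, backward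
lemma apparition (p : ℕ) (hp : p.Prime) (P Q : ℤ) (hQ : ¬ (p:ℤ) ∣ Q)
    (z : ℕ) (hz : IsLeast {n : ℕ | 1 ≤ n ∧ (p : ℤ) ∣ lucasU P Q n} z) (n : ℕ) (hn : 1 ≤ n) :
    (p:ℤ) ∣ lucasU P Q n ↔ z ∣ n := by
  obtain ⟨⟨hz1, hzd⟩, hzmin⟩ := hz
  have hpZ : Prime (p:ℤ) := Nat.prime_iff_prime_int.mp hp
  have fwd : ∀ q : ℕ, (p:ℤ) ∣ lucasU P Q (q * z) := by
    intro q
    have hz' : z - 1 + 1 = z := Nat.sub_one_add_one (by omega)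
    have := u_dvd_mul P Q (z-1) q
    rw [hz'] at this
    exact hzd.trans this
  constructor
  · intro hdvd
    by_contra hnd
    have hr : n % z ≠ 0 := fun h => hnd (Nat.dvd_of_mod_eq_zero h)
    set r := n % z with hrdef
    have hrlt : r < z := Nat.mod_lt _ (by omega)
    have hr1 : 1 ≤ r := by omega
    have hq : n = z * (n / z) + r := (Nat.div_add_mod n z).symm
    by_cases hq0 : n / z = 0
    · -- n = r < z, contradicts minimality
      have hzn : z ≤ n := hzmin ⟨hn, hdvd⟩
      rw [hq0, Nat.mul_zero, Nat.zero_add] at hq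
      omega
    · set q := n / z with hqdef
      have hq' : n = q * z + r := by rw [mul_comm]; exact hq
      have he : n = q * z + (r - 1) + 1 := by
        rw [add_assoc, Nat.sub_add_cancel hr1]; exact hq' 
      have hadd := lucasU_addf P Q (q * z) (r - 1)
      rw [← he] at hadd
      rw [Nat.sub_one_add_one (by omega)] at hadd
      have hduz : (p:ℤ) ∣ lucasU P Q (q * z) := fwd q
      have hdur : (p:ℤ) ∣ lucasU P Q (q*z+1) * lucasU P Q r := by
        have : lucasU P Q (q*z+1) * lucasU P Q r =
            lucasU P Q n + Q * lucasU P Q (q*z) * lucasU P Q (r-1) := by rw [hadd]; ring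
        rw [this]
        exact dvd_add hdvd (Dvd.dvd.mul_right (Dvd.dvd.mul_left hduz Q) _)
      rcases hpZ.dvd_mul.mp hdur with h | h
      · exact descent p hp P Q hQ (q*z) hduz h
      · have : z ≤ r := hzmin ⟨hr1, h⟩
        omega
  · intro ⟨q, hq⟩
    rw [hq, mul_comm]
    exact fwd q

lemma lte_coprime (p : ℕ) [hpf : Fact p.Prime] (P Q : ℤ) (hQ : ¬ (p:ℤ) ∣ Q)
    (m k : ℕ) (hm : 1 ≤ m) (hpk : ¬ p ∣ k)
    (hpU : (p:ℤ) ∣ lucasU P Q m) (hUm : lucasU P Q m ≠ 0) :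
    padicValInt p (lucasU P Q (k * m)) = padicValInt p (lucasU P Q m) := by
  have hp := hpf.out
  obtain ⟨m', rfl⟩ : ∃ m', m = m' + 1 := ⟨m - 1, by omega⟩
  obtain ⟨a, c, hX, -⟩ := key_pair P Q m' k
  set u := lucasU P Q (m'+1) with hu
  set v := lucasU P Q (m'+2) with hv
  have hpv : ¬ (p:ℤ) ∣ v := fun h => descent p hp P Q hQ (m'+1) hpU h
  have hr1 : 1 ≤ padicValInt p u := one_le_val p u hUm hpU
  obtain ⟨u', hu', hpu'⟩ := val_extract p u hUm
  obtain ⟨s, hs⟩ : ∃ s, padicValInt p u = s + 1 := ⟨padicValInt p u - 1, by omega⟩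
  rw [hs] at hu' 
  have hpZ : Prime (p:ℤ) := Nat.prime_iff_prime_int.mp hp
  set E : ℤ := (k:ℤ) * v^(k-1) * u' + (p:ℤ) * ((p:ℤ)^s * u'^2 * a) with hE
  have hXE : lucasU P Q (k * (m'+1)) = (p:ℤ)^(s+1) * E := by
    rw [hX, hE, hu']; ring
  have hpE : ¬ (p:ℤ) ∣ E := by
    intro h
    have h2 : (p:ℤ) ∣ (k:ℤ) * v^(k-1) * u' := by
      have : (k:ℤ) * v^(k-1) * u' = E - (p:ℤ) * ((p:ℤ)^s * u'^2 * a) := by rw [hE]; ring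
      rw [this]; exact dvd_sub h (Dvd.intro _ rfl)
    rcases hpZ.dvd_mul.mp h2 with h3 | h3
    · rcases hpZ.dvd_mul.mp h3 with h4 | h4
      · exact hpk (Int.natCast_dvd_natCast.mp h4)
      · exact hpv (hpZ.dvd_of_dvd_pow h4)
    · exact hpu' h3
  rw [hXE, val_pmul p (s+1) E hpE, hs]

lemma lte_p (p : ℕ) [hpf : Fact p.Prime] (hp3 : 2 < p) (P Q : ℤ) (hQ : ¬ (p:ℤ) ∣ Q)
    (m : ℕ) (hm : 1 ≤ m)
    (hpU : (p:ℤ) ∣ lucasU P Q m) (hUm : lucasU P Q m ≠ 0) :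
    padicValInt p (lucasU P Q (p * m)) = padicValInt p (lucasU P Q m) + 1 := by
  have hp := hpf.out
  obtain ⟨m', rfl⟩ : ∃ m', m = m' + 1 := ⟨m - 1, by omega⟩
  obtain ⟨a, hX⟩ := key_ref P Q m' (p - 2)
  have hp2 : p - 2 + 2 = p := by omega
  rw [hp2] at hX
  set u := lucasU P Q (m'+1) with hu
  set v := lucasU P Q (m'+2) with hv
  have hpv : ¬ (p:ℤ) ∣ v := fun h => descent p hp P Q hQ (m'+1) hpU h
  have hr1 : 1 ≤ padicValInt p u := one_le_val p u hUm hpU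
  obtain ⟨u', hu', hpu'⟩ := val_extract p u hUm
  obtain ⟨s, hs⟩ : ∃ s, padicValInt p u = s + 1 := ⟨padicValInt p u - 1, by omega⟩
  rw [hs] at hu' 
  have hpZ : Prime (p:ℤ) := Nat.prime_iff_prime_int.mp hp
  obtain ⟨C', hC'⟩ : p ∣ p.choose 2 := hp.dvd_choose_self (by norm_num) hp3
  have hC'' : ((p.choose 2 : ℕ) : ℤ) = (p:ℤ) * (C' : ℤ) := by rw [hC']; push_cast; ring
  have hcast : ((p - 2 : ℕ) : ℤ) + 2 = (p : ℤ) := by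
    have : ((p - 2 : ℕ) : ℤ) = (p:ℤ) - 2 := by omega
    omega
  set E : ℤ := v^(p-2+1) * u' +
      (p:ℤ) * ((p:ℤ)^s * (-P * (C':ℤ) * v^(p-2) * u'^2) + (p:ℤ)^(2*s) * (u'^3 * a)) with hE
  have hXE : lucasU P Q (p * (m'+1)) = (p:ℤ)^(s+2) * E := by
    rw [hX, hE, hu', hC'', hcast]; ring
  have hpE : ¬ (p:ℤ) ∣ E := by
    intro h
    have h2 : (p:ℤ) ∣ v^(p-2+1) * u' := by
      have : v^(p-2+1) * u' = E - (p:ℤ) * ((p:ℤ)^s * (-P * (C':ℤ) * v^(p-2) * u'^2) + (p:ℤ)^(2*s) * (u'^3 * a)) := by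
        rw [hE]; ring
      rw [this]; exact dvd_sub h (Dvd.intro _ rfl)
    rcases hpZ.dvd_mul.mp h2 with h3 | h3
    · exact hpv (hpZ.dvd_of_dvd_pow h3)
    · exact hpu' h3
  rw [hXE, val_pmul p (s+2) E hpE, hs]

lemma val_master (p : ℕ) [hpf : Fact p.Prime] (hp3 : 2 < p) (P Q : ℤ) (hQ : ¬ (p:ℤ) ∣ Q)
    (hnd : ∀ n : ℕ, 1 ≤ n → lucasU P Q n ≠ 0)
    (z : ℕ) (hz : IsLeast {n : ℕ | 1 ≤ n ∧ (p : ℤ) ∣ lucasU P Q n} z) :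
    ∀ e : ℕ, 1 ≤ e →
      padicValInt p (lucasU P Q (z * e)) = padicValInt p (lucasU P Q z) + padicValNat p e := by
  have hp := hpf.out
  have hz1 : 1 ≤ z := hz.1.1
  intro e
  induction e using Nat.strong_induction_on with
  | _ e ih =>
    intro he
    by_cases hpe : p ∣ e
    · obtain ⟨e', rfl⟩ := hpe
      have he' : 1 ≤ e' := Nat.pos_of_ne_zero (fun h => by subst h; simp at he)
      have hmain : z * (p * e') = p * (z * e') := by ring
      have hdvd : (p:ℤ) ∣ lucasU P Q (z * e') :=
        (apparition p hp P Q hQ z hz _ (Nat.mul_pos hz1 he')).mpr ⟨e', rfl⟩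
      rw [hmain, lte_p p hp3 P Q hQ (z*e') (Nat.mul_pos hz1 he') hdvd (hnd _ (Nat.mul_pos hz1 he')),
          ih e' (by calc e' < 2 * e' := by omega
                    _ ≤ p * e' := Nat.mul_le_mul_right _ (by omega)) he']
      have : padicValNat p (p * e') = 1 + padicValNat p e' := by
        rw [padicValNat.mul (by omega) (by omega), padicValNat.self (by omega)]
      omega
    · by_cases he1 : e = 1
      · subst he1; simp [padicValNat.one]
      · rw [mul_comm, lte_coprime p P Q hQ z e hz1 hpe
            ((apparition p hp P Q hQ z hz z hz1).mpr dvd_rfl) (hnd z hz1),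
            padicValNat.eq_zero_of_not_dvd hpe, add_zero]

theorem vp_moebius_dual_of_not_dvd_QD (p : ℕ) (hp : p.Prime) (hodd : Odd p)
    (P Q : ℤ) (hP : P ≠ 0) (hQ : Q ≠ 0)
    (hpQD : ¬ (p : ℤ) ∣ Q * (P ^ 2 - 4 * Q))
    (hnd : ∀ n : ℕ, 1 ≤ n → lucasU P Q n ≠ 0)
    (z : ℕ) (hz : IsLeast {n : ℕ | 1 ≤ n ∧ (p : ℤ) ∣ lucasU P Q n} z) :
    ∀ n : ℕ, 1 ≤ n →
      (n = z →
        ∑ d ∈ n.divisors, moebius (n / d) * (padicValInt p (lucasU P Q d) : ℤ) =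
          (padicValInt p (lucasU P Q z) : ℤ)) ∧
      ((∃ k : ℕ, 1 ≤ k ∧ n = p ^ k * z) →
        ∑ d ∈ n.divisors, moebius (n / d) * (padicValInt p (lucasU P Q d) : ℤ) = 1) ∧
      ((n ≠ z ∧ ¬ ∃ k : ℕ, 1 ≤ k ∧ n = p ^ k * z) →
        ∑ d ∈ n.divisors, moebius (n / d) * (padicValInt p (lucasU P Q d) : ℤ) = 0) := by
  classical
  haveI : Fact p.Prime := ⟨hp⟩
  have hpne2 : p ≠ 2 := by rintro rfl; exact (Nat.not_odd_iff_even.mpr even_two) hodd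
  have hp3 : 2 < p := by have := hp.two_le; omega
  have hpQ : ¬ (p:ℤ) ∣ Q := fun h => hpQD (h.mul_right _)
  have hz1 : 1 ≤ z := hz.1.1
  set r : ℕ := padicValInt p (lucasU P Q z) with hrdef
  set T : ℕ → ℤ := fun d =>
    (if d = z then (r:ℤ) else 0) + (if ∃ k, 1 ≤ k ∧ d = p^k*z then 1 else 0) with hT
  have hne : ∀ k, 1 ≤ k → p^k * z ≠ z := by
    intro k hk1 hkz
    have h1 : p^k * z = 1 * z := by omega
    have h2 : p^k = 1 := Nat.eq_of_mul_eq_mul_right (by omega) h1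
    have := Nat.one_lt_pow (by omega : k ≠ 0) (by omega : 1 < p)
    omega
  have hsum : ∀ N, 0 < N → ∑ d ∈ N.divisors, T d = (padicValInt p (lucasU P Q N) : ℤ) := by
    intro N hN
    rw [hT]
    rw [Finset.sum_add_distrib, Finset.sum_ite_eq', Finset.sum_boole]
    by_cases hzN : z ∣ N
    · have hzmem : z ∈ N.divisors := Nat.mem_divisors.mpr ⟨hzN, by omega⟩
      set m := N / z with hm
      have hNzm : N = z * m := (Nat.mul_div_cancel' hzN).symm
      have hm1 : 1 ≤ m := Nat.pos_of_ne_zero (fun h => by rw [h, Nat.mul_zero] at hNzm; omega)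
      have hval : padicValInt p (lucasU P Q N) = r + padicValNat p m := by
        conv_lhs => rw [hNzm]
        exact val_master p hp3 P Q hpQ hnd z hz m hm1
      set v := padicValNat p m with hv
      have hpow_le : ∀ k : ℕ, (p^k ∣ m ↔ k ≤ v) := by
        intro k
        rw [hv, ← Nat.factorization_def m hp]
        exact Nat.Prime.pow_dvd_iff_le_factorization hp (by omega)
      have hcard : ((N.divisors.filter (fun d => ∃ k, 1 ≤ k ∧ d = p^k*z)).card : ℤ) = (v : ℤ) := by
        have hbij : (Finset.Icc 1 v).card =
            (N.divisors.filter (fun d => ∃ k, 1 ≤ k ∧ d = p^k*z)).card := by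
          apply Finset.card_nbij (i := fun k => p^k * z)
          · intro k hk
            rw [Finset.mem_coe, Finset.mem_Icc] at hk
            rw [Finset.mem_coe, Finset.mem_filter, Nat.mem_divisors]
            refine ⟨⟨?_, by omega⟩, k, hk.1, rfl⟩
            show p^k * z ∣ N
            rw [hNzm, mul_comm (p^k) z]
            exact Nat.mul_dvd_mul_left z ((hpow_le k).mpr hk.2)
          · intro a _ b _ hab
            simp only at hab
            have : p^a = p^b := Nat.eq_of_mul_eq_mul_right (by omega) hab
            exact Nat.pow_right_injective hp.two_le this
          · intro d hd
            simp only [Finset.coe_filter, Set.mem_setOf_eq] at hd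
            obtain ⟨hdN, k, hk1, rfl⟩ := hd
            refine ⟨k, ?_, rfl⟩
            rw [Finset.coe_Icc, Set.mem_Icc]
            refine ⟨hk1, (hpow_le k).mp ?_⟩
            have hdvd : p^k * z ∣ z * m := hNzm ▸ (Nat.mem_divisors.mp hdN).1
            rw [mul_comm (p^k) z] at hdvd
            exact (Nat.mul_dvd_mul_iff_left (by omega : 0 < z)).mp hdvd
        rw [← hbij, Nat.card_Icc]
        simp
      rw [if_pos hzmem, hcard, hval]
      push_cast
      ring
    · have hzmem : z ∉ N.divisors := fun h => hzN (Nat.mem_divisors.mp h).1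
      have hFz : padicValInt p (lucasU P Q N) = 0 := by
        apply padicValInt.eq_zero_of_not_dvd
        intro h
        exact hzN ((apparition p hp P Q hpQ z hz N (by omega)).mp h)
      have hfe : (N.divisors.filter (fun d => ∃ k, 1 ≤ k ∧ d = p^k*z)) = ∅ := by
        rw [Finset.filter_eq_empty_iff]
        rintro d hd ⟨k, hk1, rfl⟩
        exact hzN ((dvd_mul_left z (p^k)).trans (Nat.mem_divisors.mp hd).1)
      rw [if_neg hzmem, hfe, hFz]
      simp
  have inv := (ArithmeticFunction.sum_eq_iff_sum_smul_moebius_eq (R := ℤ) (f := T)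
      (g := fun N => (padicValInt p (lucasU P Q N) : ℤ))).mp hsum
  have hS : ∀ n : ℕ, 0 < n →
      ∑ d ∈ n.divisors, moebius (n / d) * (padicValInt p (lucasU P Q d) : ℤ) = T n := by
    intro n hn
    have h2 := inv n hn
    rw [Nat.sum_divisorsAntidiagonal'
      (f := fun a b => (moebius a : ℤ) • ((padicValInt p (lucasU P Q b) : ℤ)))] at h2
    simpa [smul_eq_mul] using h2
  intro n hn
  refine ⟨?_, ?_, ?_⟩
  · rintro rfl
    rw [hS n hn, hT]
    simp only
    rw [if_pos trivial, if_neg (fun ⟨k, hk1, hkz⟩ => hne k hk1 hkz.symm), add_zero]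
  · rintro ⟨k, hk1, rfl⟩
    rw [hS _ hn, hT]
    simp only
    rw [if_neg (hne k hk1), if_pos ⟨k, hk1, rfl⟩, zero_add]
  · rintro ⟨h1, h2⟩
    rw [hS n hn, hT]
    simp only
    rw [if_neg h1, if_neg (fun ⟨k, hk1, hkz⟩ => h2 ⟨k, hk1, hkz⟩), add_zero]
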